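/- Let d = 2m be even and f a balanced neighborly polynomial of type (n_1,...,n_d) with n_1 ≥ n_2 ≥ ... ≥ n_d. Then n_1 = n_2 = ... = n_d. -/

import Mathlib

open MvPolynomial

/-- `diffMon m f` is the result of applying the differential operator `∂^m` to `f`. -/
noncomputable def diffMon {K σ : Type*} [CommSemiring K] (m : σ →₀ ℕ)
    (f : MvPolynomial σ K) : MvPolynomial σ K :=
  ∑ m' ∈ f.support,
    ((∏ i ∈ m.support, ((m' i).descFactorial (m i) : K)) * coeff m' f) •
      monomial (m' - m) (1 : K)

/-- `applyTo f g = g(∂₁,…,∂ₙ) f`, linear in `g`. -/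
noncomputable def applyTo {K σ : Type*} [CommSemiring K] (f : MvPolynomial σ K) :
    MvPolynomial σ K →ₗ[K] MvPolynomial σ K :=
  Finsupp.lsum K (fun m => LinearMap.toSpanSingleton K (MvPolynomial σ K) (diffMon m f)) ∘ₗ
    (AddMonoidAlgebra.coeffLinearEquiv K).toLinearMap

/-- The multidegree of an exponent vector `m` with respect to the coloring `c`. -/
def mdeg {σ : Type*} {d : ℕ} (c : σ → Fin d) (m : σ →₀ ℕ) (i : Fin d) : ℕ :=
  m.sum fun x k => if c x = i then k else 0

/-- The `ℤ^d`-graded component of the polynomial ring of multidegree `v`,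
with respect to the coloring `c` of the variables. -/
noncomputable def componentSub (K : Type*) [CommSemiring K] {σ : Type*} {d : ℕ}
    (c : σ → Fin d) (v : Fin d → ℕ) : Submodule K (MvPolynomial σ K) :=
  Submodule.span K {p | ∃ m : σ →₀ ℕ, (∀ i, mdeg c m i = v i) ∧ p = monomial m (1 : K)}

/-- `Hdim f S` is `H(f,S)`, the dimension of `{g(∂)f : g ∈ R_{e_S}}`. -/
noncomputable def Hdim {K : Type*} [Field K] {σ : Type*} {d : ℕ} (c : σ → Fin d)
    (f : MvPolynomial σ K) (S : Finset (Fin d)) : ℕ :=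
  Module.finrank K ((componentSub K c (fun i => if i ∈ S then 1 else 0)).map (applyTo f))

/-! An operator `g(∂)` with `g` of multidegree `e_S` maps `f`, of multidegree `(1,…,1)`, into
the component of multidegree `e_{Sᶜ}`, which is spanned by the `∏_{i ∉ S} n_i` monomials
`∏_{i ∉ S} x_{i,t_i}`; hence `H(f,S) ≤ ∏_{i ∉ S} n_i`. For `|S| = m`, neighborliness applied
to `S` and to `Sᶜ` forces `∏_{i ∈ S} n_i = ∏_{i ∉ S} n_i`, so `(∏_{i ∈ S} n_i)² = ∏_i n_i` and
all `m`-fold products agree. Comparing `A ∪ {i}` with `A ∪ {j}` gives `n_i = n_j`, the `n_i`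
being positive because `f ≠ 0`. -/

section Grading

variable {K σ : Type*} {d : ℕ} (c : σ → Fin d)

lemma mdeg_add (μ ν : σ →₀ ℕ) (i : Fin d) : mdeg c (μ + ν) i = mdeg c μ i + mdeg c ν i := by
  unfold mdeg
  rw [Finsupp.sum_add_index']
  · intro x; simp
  · intro x a b; split <;> simp

variable [CommSemiring K]

lemma mdeg_eq_of_mem_support {v : Fin d → ℕ} {f : MvPolynomial σ K}
    (hf : f ∈ componentSub K c v) {μ : σ →₀ ℕ} (hμ : μ ∈ f.support) : mdeg c μ = v := by
  classical
  induction hf using Submodule.span_induction generalizing μ with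
  | mem p hp =>
    obtain ⟨ν, hν, rfl⟩ := hp
    exact (Finset.mem_singleton.1 (support_monomial_subset hμ)) ▸ funext hν
  | zero => simp at hμ
  | add p q _ _ hp hq =>
    rcases Finset.mem_union.1 (Finsupp.support_add hμ) with h | h
    exacts [hp h, hq h]
  | smul a p _ hp => exact hp (Finsupp.support_smul hμ)

lemma le_of_prod_descFactorial_ne_zero {μ μ' : σ →₀ ℕ}
    (h : ∏ x ∈ μ.support, ((μ' x).descFactorial (μ x) : K) ≠ 0) : μ ≤ μ' := by
  intro x
  by_contra! hlt
  refine h (Finset.prod_eq_zero (i := x) ?_ ?_)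
  · exact Finsupp.mem_support_iff.2 (by omega)
  · simp [Nat.descFactorial_eq_zero_iff_lt.2 hlt]

lemma diffMon_mem_componentSub {e v : Fin d → ℕ} {f : MvPolynomial σ K}
    (hf : f ∈ componentSub K c e) {μ : σ →₀ ℕ} (hμ : mdeg c μ = v) :
    diffMon μ f ∈ componentSub K c (e - v) := by
  refine Submodule.sum_mem _ fun μ' hμ' => ?_
  by_cases h : (∏ x ∈ μ.support, ((μ' x).descFactorial (μ x) : K)) * coeff μ' f = 0
  · rw [h, zero_smul]
    exact Submodule.zero_mem _
  have hle : μ ≤ μ' := le_of_prod_descFactorial_ne_zero (left_ne_zero_of_mul h)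
  refine Submodule.smul_mem _ _ (Submodule.subset_span ⟨μ' - μ, fun i => ?_, rfl⟩)
  have hadd := mdeg_add c (μ' - μ) μ i
  rw [tsub_add_cancel_of_le hle, mdeg_eq_of_mem_support c hf hμ', hμ] at hadd
  simp only [Pi.sub_apply]
  omega

lemma applyTo_monomial_one (f : MvPolynomial σ K) (μ : σ →₀ ℕ) :
    applyTo f (monomial μ (1 : K)) = diffMon μ f := by
  have : applyTo f (monomial μ (1 : K)) =
      LinearMap.toSpanSingleton K (MvPolynomial σ K) (diffMon μ f) 1 :=
    sum_monomial_eq (map_zero _)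
  rw [this, LinearMap.toSpanSingleton_apply, one_smul]

theorem map_applyTo_componentSub_le {e : Fin d → ℕ} {f : MvPolynomial σ K}
    (hf : f ∈ componentSub K c e) (v : Fin d → ℕ) :
    (componentSub K c v).map (applyTo f) ≤ componentSub K c (e - v) := by
  rw [componentSub, Submodule.map_span, Submodule.span_le]
  rintro _ ⟨_, ⟨μ, hμ, rfl⟩, rfl⟩
  rw [SetLike.mem_coe, applyTo_monomial_one]
  exact diffMon_mem_componentSub c hf (funext hμ)

end Grading

section Blocks

variable {K : Type*} {d : ℕ} {α : Fin d → Type*} [∀ i, Fintype (α i)]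

lemma mdeg_sigmaFst (μ : (Σ i, α i) →₀ ℕ) (i : Fin d) :
    mdeg Sigma.fst μ i = (μ.split i).degree := by
  classical
  rw [mdeg, Finsupp.sum_fintype _ _ (fun _ => by simp), Finsupp.degree_eq_sum, Fintype.sum_sigma,
    Fintype.sum_eq_single i fun j hj => by simp [hj]]
  simp [Finsupp.split_apply]

lemma eq_zero_of_mem_componentSub_of_isEmpty [CommSemiring K] {v : Fin d → ℕ}
    {f : MvPolynomial (Σ i, α i) K} (hf : f ∈ componentSub K Sigma.fst v) {i : Fin d}
    (hi : IsEmpty (α i)) (hv : v i ≠ 0) : f = 0 := by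
  suffices componentSub K Sigma.fst v = ⊥ by rwa [this, Submodule.mem_bot] at hf
  refine Submodule.span_eq_bot.2 ?_
  rintro _ ⟨μ, hμ, -⟩
  refine absurd ?_ hv
  rw [← hμ i, mdeg_sigmaFst, Subsingleton.elim (μ.split i) 0, map_zero]

variable (K) in
/-- The monomial `∏_{i ∈ T} x_{i, t i}`. -/
noncomputable def transversalMonomial [CommSemiring K] (T : Finset (Fin d))
    (t : ∀ i : T, α i) : MvPolynomial (Σ i, α i) K :=
  monomial (Finsupp.sigmaFinsuppEquivPiFinsupp.symm
    fun i => if h : i ∈ T then Finsupp.single (t ⟨i, h⟩) 1 else 0) 1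

lemma exists_transversal_of_mdeg_eq_indicator {T : Finset (Fin d)} {μ : (Σ i, α i) →₀ ℕ}
    (hμ : ∀ i, mdeg Sigma.fst μ i = if i ∈ T then 1 else 0) :
    ∃ t : ∀ i : T, α i, μ = Finsupp.sigmaFinsuppEquivPiFinsupp.symm
      fun i => if h : i ∈ T then Finsupp.single (t ⟨i, h⟩) 1 else 0 := by
  have hsingle (i : T) : ∃ a, μ.split i = Finsupp.single a 1 := by
    have h := (mdeg_sigmaFst μ i).symm.trans (hμ i)
    rw [if_pos i.2] at h
    exact (Finsupp.sum_eq_one_iff _).1 h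
  choose t ht using hsingle
  refine ⟨t, Finsupp.sigmaFinsuppEquivPiFinsupp.eq_symm_apply.2 (funext fun i => ?_)⟩
  have h := (mdeg_sigmaFst μ i).symm.trans (hμ i)
  split_ifs at h ⊢ with hi
  · exact ht ⟨i, hi⟩
  · exact (Finsupp.degree_eq_zero_iff _).1 h

lemma componentSub_indicator_le_span [CommSemiring K] (T : Finset (Fin d)) :
    componentSub K (Sigma.fst : (Σ i, α i) → Fin d) (fun i => if i ∈ T then 1 else 0) ≤
      Submodule.span K (Set.range (transversalMonomial K T)) := by
  rw [componentSub, Submodule.span_le]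
  rintro _ ⟨μ, hμ, rfl⟩
  obtain ⟨t, rfl⟩ := exists_transversal_of_mdeg_eq_indicator hμ
  exact Submodule.subset_span ⟨t, rfl⟩

theorem Hdim_le_prod_compl [Field K] {f : MvPolynomial (Σ i, α i) K}
    (hf : f ∈ componentSub K Sigma.fst (fun _ => 1)) (S : Finset (Fin d)) :
    Hdim Sigma.fst f S ≤ ∏ i ∈ Sᶜ, Fintype.card (α i) := by
  classical
  have hcompl : ((fun _ => 1) - fun i => if i ∈ S then 1 else 0) =
      fun i => if i ∈ Sᶜ then 1 else 0 := by
    funext i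
    by_cases h : i ∈ S <;> simp [h]
  have hle := (map_applyTo_componentSub_le Sigma.fst hf _).trans
    (hcompl ▸ componentSub_indicator_le_span Sᶜ)
  have := FiniteDimensional.span_of_finite K (Set.finite_range (transversalMonomial K (α := α) Sᶜ))
  calc Hdim Sigma.fst f S ≤ Fintype.card (∀ i : (Sᶜ : Finset (Fin d)), α i) :=
        (Submodule.finrank_mono hle).trans (finrank_range_le_card _)
    _ = ∏ i ∈ Sᶜ, Fintype.card (α i) := by
        rw [Fintype.card_pi, Finset.prod_coe_sort Sᶜ fun i => Fintype.card (α i)]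

end Blocks

section Balanced

variable {ι : Type*} [Fintype ι] [DecidableEq ι] {n : ι → ℕ} {k : ℕ}

lemma prod_eq_prod_of_forall_prod_eq_prod_compl
    (hbal : ∀ S : Finset ι, S.card = k → ∏ i ∈ S, n i = ∏ i ∈ Sᶜ, n i)
    {S T : Finset ι} (hS : S.card = k) (hT : T.card = k) :
    ∏ i ∈ S, n i = ∏ i ∈ T, n i := by
  refine Nat.mul_self_inj.1 ?_
  calc (∏ i ∈ S, n i) * ∏ i ∈ S, n i = (∏ i ∈ S, n i) * ∏ i ∈ Sᶜ, n i := by rw [← hbal S hS]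
    _ = ∏ i, n i := Finset.prod_mul_prod_compl S n
    _ = (∏ i ∈ T, n i) * ∏ i ∈ Tᶜ, n i := (Finset.prod_mul_prod_compl T n).symm
    _ = (∏ i ∈ T, n i) * ∏ i ∈ T, n i := by rw [← hbal T hT]

lemma eq_of_forall_prod_eq_prod (hn : ∀ i, n i ≠ 0) (hk : 0 < k) (hkι : k < Fintype.card ι)
    (hconst : ∀ S T : Finset ι, S.card = k → T.card = k → ∏ i ∈ S, n i = ∏ i ∈ T, n i)
    (i j : ι) : n i = n j := by
  rcases eq_or_ne i j with rfl | hij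
  · rfl
  obtain ⟨A, hA, hAcard⟩ : ∃ A ⊆ ({i, j} : Finset ι)ᶜ, A.card = k - 1 := by
    refine Finset.exists_subset_card_eq ?_
    rw [Finset.card_compl, Finset.card_pair hij]
    omega
  have hi : i ∉ A := fun h => Finset.mem_compl.1 (hA h) (by simp)
  have hj : j ∉ A := fun h => Finset.mem_compl.1 (hA h) (by simp)
  have h := hconst (insert i A) (insert j A) (by rw [Finset.card_insert_of_notMem hi]; omega)
    (by rw [Finset.card_insert_of_notMem hj]; omega)
  rw [Finset.prod_insert hi, Finset.prod_insert hj] at h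
  have hA : 0 < ∏ a ∈ A, n a := Nat.pos_of_ne_zero (Finset.prod_ne_zero_iff.2 fun a _ => hn a)
  exact Nat.eq_of_mul_eq_mul_right hA h

theorem eq_of_forall_prod_eq_prod_compl (hn : ∀ i, n i ≠ 0) (hk : 0 < k)
    (hkι : k < Fintype.card ι)
    (hbal : ∀ S : Finset ι, S.card = k → ∏ i ∈ S, n i = ∏ i ∈ Sᶜ, n i) (i j : ι) :
    n i = n j :=
  eq_of_forall_prod_eq_prod hn hk hkι
    (fun _ _ => prod_eq_prod_of_forall_prod_eq_prod_compl hbal) i j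

end Balanced

theorem stmt13_general (K : Type*) [Field K] (m : ℕ) (n : Fin (2 * m) → ℕ)
    (f : MvPolynomial (Σ i : Fin (2 * m), Fin (n i)) K) (hf0 : f ≠ 0)
    (hf : f ∈ componentSub K (Sigma.fst : (Σ i : Fin (2 * m), Fin (n i)) → Fin (2 * m))
            (fun _ => 1))
    (hneigh : ∀ S : Finset (Fin (2 * m)), S.card ≤ m →
        Hdim Sigma.fst f S = ∏ i ∈ S, n i) :
    ∀ i j : Fin (2 * m), n i = n j := by
  intro i j
  have hm : 0 < m := by have := i.pos; omega
  have hn (i : Fin (2 * m)) : n i ≠ 0 := fun hi =>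
    hf0 (eq_zero_of_mem_componentSub_of_isEmpty hf (by rw [hi]; infer_instance) one_ne_zero)
  have hbal (S : Finset (Fin (2 * m))) (hS : S.card = m) : ∏ i ∈ S, n i = ∏ i ∈ Sᶜ, n i := by
    have hSc : Sᶜ.card = m := by rw [Finset.card_compl, hS, Fintype.card_fin]; omega
    refine le_antisymm ?_ ?_
    · simpa [← hneigh S hS.le] using Hdim_le_prod_compl hf S
    · simpa [← hneigh Sᶜ hSc.le] using Hdim_le_prod_compl hf Sᶜ
  exact eq_of_forall_prod_eq_prod_compl hn hm (by rw [Fintype.card_fin]; omega) hbal i j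

/-- If `d = 2m` is even and `f` is a balanced neighborly polynomial of type
`(n₁,…,n_d)` with `n₁ ≥ n₂ ≥ ⋯ ≥ n_d`, then `n₁ = n₂ = ⋯ = n_d`. -/
theorem stmt13 (K : Type*) [Field K] (m : ℕ) (hm : 0 < m) (n : Fin (2 * m) → ℕ)
    (hmono : ∀ i j : Fin (2 * m), i ≤ j → n j ≤ n i)
    (f : MvPolynomial (Σ i : Fin (2 * m), Fin (n i)) K) (hf0 : f ≠ 0)
    (hf : f ∈ componentSub K (Sigma.fst : (Σ i : Fin (2 * m), Fin (n i)) → Fin (2 * m))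
            (fun _ => 1))
    (hneigh : ∀ S : Finset (Fin (2 * m)), S.card ≤ m →
        Hdim Sigma.fst f S = ∏ i ∈ S, n i) :
    ∀ i j : Fin (2 * m), n i = n j :=
  stmt13_general K m n f hf0 hf hneigh
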